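/- Fix m₂ > 0, ν > m₂ + 1/2, and w ∈ (0,1). Then the map m₁ ↦ ∫₀^w ∫₀^∞ h_{m₁}(u,t) du dt tends, as m₁ → (m₂ + 1/2)⁺, to ∫₀^w ∫₀^∞ h_{m₂+1/2}(u,t) du dt, where for a parameter m₁ > 0 we set h_{m₁}(u,t) = K₀(m₁) · u^{(m₁+m₂)/2−1} · t^{m₁/2−1} · (1−t)^{m₂/2−1} · (1 + m₁ut/ν)^{−(m₁+ν)/2} · (1 + m₂u(1−t)/ν)^{−(m₂+ν)/2} and K₀(m₁) = (m₁/ν)^{m₁/2}(m₂/ν)^{m₂/2} / (B(m₁/2, ν/2) · B(m₂/2, ν/2)). In particular the limit Λ(w) = lim_{m₁→(m₂+1/2)⁺} ∫₀^w ∫₀^∞ h_{m₁}(u,t) du dt exists. -/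

import Mathlib

/-!
Continuity in `m₁` holds at every `m > 0`, by dominated convergence in `u` and then in `t`.
For `m₁` in a window `[lo, hi]` around `m`, the factor `(1 + m₁ u t / ν) ^ (-(m₁ + ν) / 2)` is
bounded by `(lo u t / ν) ^ (-s)`. This moves a power `s < lo / 2` from `t` to `u`: the
`t`-factor `t ^ (lo / 2 - 1 - s)` stays integrable at `0`, while the `u`-factor still decays
fast enough at infinity as long as `hi - 2 s < ν`.
-/

open Real MeasureTheory Set Filter

/-- Beta function `B(a,b) = Γ(a)Γ(b)/Γ(a+b)`. -/
noncomputable def Beta (a b : ℝ) : ℝ := Gamma a * Gamma b / Gamma (a + b)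

/-- The normalizing constant `K₀(m₁)`, for fixed `m₂` and common denominator
degrees of freedom `ν`. -/
noncomputable def K₀ (m₂ ν : ℝ) (m₁ : ℝ) : ℝ :=
  (m₁ / ν) ^ (m₁ / 2) * (m₂ / ν) ^ (m₂ / 2) /
    (Beta (m₁ / 2) (ν / 2) * Beta (m₂ / 2) (ν / 2))

/-- The joint density `h_{m₁}(u,t)`. -/
noncomputable def hDens (m₂ ν : ℝ) (m₁ : ℝ) (u t : ℝ) : ℝ :=
  K₀ m₂ ν m₁ * u ^ ((m₁ + m₂) / 2 - 1) * t ^ (m₁ / 2 - 1) * (1 - t) ^ (m₂ / 2 - 1) *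
    (1 + m₁ * u * t / ν) ^ (-(m₁ + ν) / 2) *
    (1 + m₂ * u * (1 - t) / ν) ^ (-(m₂ + ν) / 2)

open Topology

lemma Beta_pos {a b : ℝ} (ha : 0 < a) (hb : 0 < b) : 0 < Beta a b :=
  ProbabilityTheory.beta_pos ha hb

lemma K₀_nonneg {m₂ ν m₁ : ℝ} (hm₂ : 0 < m₂) (hν : 0 < ν) (hm₁ : 0 < m₁) :
    0 ≤ K₀ m₂ ν m₁ := by
  have := Beta_pos (half_pos hm₁) (half_pos hν)
  have := Beta_pos (half_pos hm₂) (half_pos hν)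
  unfold K₀
  positivity

lemma continuousAt_Beta_left {a b : ℝ} (ha : 0 < a) (hb : 0 < b) :
    ContinuousAt (fun x => Beta x b) a := by
  have hΓ : ∀ x : ℝ, 0 < x → ContinuousAt Gamma x := fun x hx =>
    Real.differentiableOn_Gamma_Ioi.continuousOn.continuousAt (Ioi_mem_nhds hx)
  unfold Beta
  exact ((hΓ a ha).mul continuousAt_const).div
    (ContinuousAt.comp' (f := fun x => x + b) (hΓ _ (add_pos ha hb)) (by fun_prop))
    (Gamma_pos_of_pos (add_pos ha hb)).ne'

lemma continuousAt_K₀ {m₂ ν m : ℝ} (hm₂ : 0 < m₂) (hν : 0 < ν) (hm : 0 < m) :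
    ContinuousAt (K₀ m₂ ν) m := by
  have hB : ContinuousAt (fun x => Beta (x / 2) (ν / 2)) m :=
    ContinuousAt.comp' (f := fun x => x / 2) (continuousAt_Beta_left (half_pos hm) (half_pos hν))
      (by fun_prop)
  unfold K₀
  refine ContinuousAt.div ?_ (hB.mul continuousAt_const) ?_
  · exact ((continuousAt_id.div_const ν).rpow (continuousAt_id.div_const 2)
      (Or.inl (div_pos hm hν).ne')).mul continuousAt_const
  · exact (mul_pos (Beta_pos (half_pos hm) (half_pos hν))
      (Beta_pos (half_pos hm₂) (half_pos hν))).ne'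

lemma hDens_nonneg {m₂ ν m₁ u t : ℝ} (hm₂ : 0 < m₂) (hν : 0 < ν) (hm₁ : 0 < m₁)
    (hu : 0 ≤ u) (ht : t ∈ Icc 0 1) : 0 ≤ hDens m₂ ν m₁ u t := by
  obtain ⟨ht0, ht1⟩ := ht
  have := K₀_nonneg hm₂ hν hm₁
  have : 0 ≤ 1 - t := sub_nonneg.2 ht1
  unfold hDens
  positivity

lemma continuousAt_hDens {m₂ ν m u t : ℝ} (hm₂ : 0 < m₂) (hν : 0 < ν) (hm : 0 < m)
    (hu : 0 < u) (ht : 0 < t) : ContinuousAt (fun m₁ => hDens m₂ ν m₁ u t) m := by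
  have hbase : 0 < 1 + m * u * t / ν := by positivity
  unfold hDens
  refine ((((continuousAt_K₀ hm₂ hν hm).mul ?_).mul ?_).mul continuousAt_const).mul ?_
    |>.mul continuousAt_const
  · exact continuousAt_const.rpow (by fun_prop) (Or.inl hu.ne')
  · exact continuousAt_const.rpow (by fun_prop) (Or.inl ht.ne')
  · exact ContinuousAt.rpow (by fun_prop) (by fun_prop) (Or.inl hbase.ne')

lemma measurable_hDens_uncurry (m₂ ν m₁ : ℝ) :
    Measurable fun p : ℝ × ℝ => hDens m₂ ν m₁ p.2 p.1 := by
  unfold hDens; fun_prop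

lemma Real.rpow_le_rpow_add_rpow {u a b x : ℝ} (hu : 0 < u) (hax : a ≤ x) (hxb : x ≤ b) :
    u ^ x ≤ u ^ a + u ^ b := by
  rcases le_total u 1 with h | h
  · linarith [rpow_le_rpow_of_exponent_ge hu h hax, rpow_nonneg hu.le b]
  · linarith [rpow_le_rpow_of_exponent_le h hxb, rpow_nonneg hu.le a]

lemma Real.one_add_rpow_neg_le_rpow_neg {x s q : ℝ} (hx : 0 < x) (hs : 0 ≤ s) (hsq : s ≤ q) :
    (1 + x) ^ (-q) ≤ x ^ (-s) :=
  calc (1 + x) ^ (-q) ≤ (1 + x) ^ (-s) :=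
        rpow_le_rpow_of_exponent_le (by linarith) (neg_le_neg hsq)
    _ ≤ x ^ (-s) := rpow_le_rpow_of_nonpos hx (by linarith) (neg_nonpos.2 hs)

lemma Real.rpow_one_sub_le_max {t w e : ℝ} (ht : t ∈ Icc 0 w) (hw : w < 1) :
    (1 - t) ^ e ≤ max ((1 - w) ^ e) 1 := by
  obtain ⟨ht0, htw⟩ := ht
  rcases le_or_gt 0 e with he | he
  · exact (rpow_le_one (by linarith) (by linarith) he).trans (le_max_right _ _)
  · exact (rpow_le_rpow_of_nonpos (by linarith) (by linarith) he.le).trans (le_max_left _ _)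

lemma integrableOn_Ioi_rpow_mul_one_add_mul_rpow_neg {a p c : ℝ} (ha : -1 < a) (hap : a + 1 < p)
    (hc : 0 < c) : IntegrableOn (fun u : ℝ => u ^ a * (1 + c * u) ^ (-p)) (Ioi 0) := by
  have hmeas : AEStronglyMeasurable (fun u : ℝ => u ^ a * (1 + c * u) ^ (-p)) :=
    (by fun_prop : Measurable fun u : ℝ => u ^ a * (1 + c * u) ^ (-p)).aestronglyMeasurable
  rw [← Ioc_union_Ioi_eq_Ioi zero_le_one]
  refine IntegrableOn.union ?_ ?_
  · refine (intervalIntegral.intervalIntegrable_rpow' ha).1.mono' hmeas.restrict ?_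
    filter_upwards [ae_restrict_mem measurableSet_Ioc] with u hu
    have hu0 : 0 < u := hu.1
    rw [norm_of_nonneg (by positivity)]
    exact mul_le_of_le_one_right (by positivity)
      (rpow_le_one_of_one_le_of_nonpos (by nlinarith) (by linarith))
  · refine ((integrableOn_Ioi_rpow_of_lt (show a - p < -1 by linarith) one_pos).const_mul
      (c ^ (-p))).mono' hmeas.restrict ?_
    filter_upwards [ae_restrict_mem measurableSet_Ioi] with u (hu1 : 1 < u)
    have hu0 : 0 < u := by linarith
    rw [norm_of_nonneg (by positivity)]
    calc u ^ a * (1 + c * u) ^ (-p) ≤ u ^ a * (c * u) ^ (-p) :=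
          mul_le_mul_of_nonneg_left
            (rpow_le_rpow_of_nonpos (by positivity) (by linarith) (by linarith)) (by positivity)
      _ = c ^ (-p) * u ^ (a - p) := by
          rw [mul_rpow hc.le hu0.le, sub_eq_add_neg, rpow_add hu0]; ring

lemma hDens_le {m₂ ν w K lo hi s m₁ u t : ℝ} (hm₂ : 0 < m₂) (hν : 0 < ν) (hw : w < 1)
    (hlo : 0 < lo) (hm₁ : m₁ ∈ Icc lo hi) (hs : 0 ≤ s) (hsν : s ≤ (lo + ν) / 2)
    (hK : K₀ m₂ ν m₁ ≤ K) (ht : t ∈ Ioc 0 w) (hu : 0 < u) :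
    hDens m₂ ν m₁ u t ≤ t ^ (lo / 2 - 1 - s) *
      (K * (lo / ν) ^ (-s) * max ((1 - w) ^ (m₂ / 2 - 1)) 1 *
        ((u ^ ((lo + m₂) / 2 - 1 - s) + u ^ ((hi + m₂) / 2 - 1 - s)) *
          (1 + m₂ * (1 - w) / ν * u) ^ (-((m₂ + ν) / 2)))) := by
  obtain ⟨ht0, htw⟩ := ht
  have h1t : 0 < 1 - t := by linarith
  have h1w : 0 < 1 - w := by linarith
  have hm₁0 : 0 < m₁ := hlo.trans_le hm₁.1
  have hK₀ := K₀_nonneg hm₂ hν hm₁0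
  have hK0 : 0 ≤ K := hK₀.trans hK
  have hT : t ^ (m₁ / 2 - 1) ≤ t ^ (lo / 2 - 1) :=
    rpow_le_rpow_of_exponent_ge ht0 (by linarith) (by linarith [hm₁.1])
  have hP₁ : (1 + m₁ * u * t / ν) ^ (-(m₁ + ν) / 2) ≤ (lo / ν * u * t) ^ (-s) := by
    calc (1 + m₁ * u * t / ν) ^ (-(m₁ + ν) / 2)
        = (1 + m₁ * u * t / ν) ^ (-((m₁ + ν) / 2)) := by rw [neg_div]
      _ ≤ (m₁ * u * t / ν) ^ (-s) :=
          one_add_rpow_neg_le_rpow_neg (by positivity) hs (by linarith [hm₁.1])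
      _ ≤ (lo / ν * u * t) ^ (-s) := by
          refine rpow_le_rpow_of_nonpos (by positivity) ?_ (by linarith)
          rw [div_mul_eq_mul_div, div_mul_eq_mul_div, div_le_div_iff_of_pos_right hν]
          gcongr
          exact hm₁.1
  have hP₂ : (1 + m₂ * u * (1 - t) / ν) ^ (-(m₂ + ν) / 2)
      ≤ (1 + m₂ * (1 - w) / ν * u) ^ (-((m₂ + ν) / 2)) := by
    rw [neg_div]
    refine rpow_le_rpow_of_nonpos (by positivity) (add_le_add_right ?_ 1) (by linarith)
    rw [div_mul_eq_mul_div, div_le_div_iff_of_pos_right hν]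
    nlinarith [mul_pos hm₂ hu]
  have hU : u ^ ((m₁ + m₂) / 2 - 1 - s)
      ≤ u ^ ((lo + m₂) / 2 - 1 - s) + u ^ ((hi + m₂) / 2 - 1 - s) :=
    rpow_le_rpow_add_rpow hu (by linarith [hm₁.1]) (by linarith [hm₁.2])
  calc hDens m₂ ν m₁ u t
      ≤ K * u ^ ((m₁ + m₂) / 2 - 1) * t ^ (lo / 2 - 1) * max ((1 - w) ^ (m₂ / 2 - 1)) 1 *
          (lo / ν * u * t) ^ (-s) * (1 + m₂ * (1 - w) / ν * u) ^ (-((m₂ + ν) / 2)) := by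
        unfold hDens
        gcongr ?_ * ?_ * ?_ * ?_ * ?_ * ?_
        exact rpow_one_sub_le_max ⟨ht0.le, htw⟩ hw
    _ = t ^ (lo / 2 - 1 - s) * (K * (lo / ν) ^ (-s) * max ((1 - w) ^ (m₂ / 2 - 1)) 1 *
          (u ^ ((m₁ + m₂) / 2 - 1 - s) * (1 + m₂ * (1 - w) / ν * u) ^ (-((m₂ + ν) / 2)))) := by
        rw [mul_rpow (by positivity) ht0.le, mul_rpow (by positivity) hu.le, sub_eq_add_neg _ s,
          sub_eq_add_neg _ s, rpow_add ht0, rpow_add hu]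
        ring
    _ ≤ _ := by gcongr

lemma exists_hDens_dominated {m₂ ν w m : ℝ} (hm₂ : 0 < m₂) (hν : 0 < ν) (hw : w < 1)
    (hm : 0 < m) :
    ∃ (α : ℝ) (φ : ℝ → ℝ), -1 < α ∧ IntegrableOn φ (Ioi 0) ∧
      ∀ᶠ m₁ in 𝓝 m, ∀ t ∈ Ioc 0 w, ∀ u ∈ Ioi (0 : ℝ), ‖hDens m₂ ν m₁ u t‖ ≤ t ^ α * φ u := by
  obtain ⟨lo, hi, s, hlo, ⟨hlom, hmhi⟩, hs, hslo, hshi⟩ :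
      ∃ lo hi s : ℝ, 0 < lo ∧ m ∈ Ioo lo hi ∧ 0 ≤ s ∧ s < lo / 2 ∧ hi < ν + 2 * s := by
    have := min_le_left m ν
    have := min_le_right m ν
    have : 0 < min m ν := lt_min hm hν
    refine ⟨m - min m ν / 4, m + min m ν / 4, m / 2 - min m ν / 4, ?_, ⟨?_, ?_⟩, ?_, ?_, ?_⟩ <;>
      linarith
  set K := K₀ m₂ ν m + 1
  have hc : 0 < m₂ * (1 - w) / ν := div_pos (mul_pos hm₂ (by linarith)) hν
  refine ⟨lo / 2 - 1 - s, fun u => K * (lo / ν) ^ (-s) * max ((1 - w) ^ (m₂ / 2 - 1)) 1 *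
    ((u ^ ((lo + m₂) / 2 - 1 - s) + u ^ ((hi + m₂) / 2 - 1 - s)) *
      (1 + m₂ * (1 - w) / ν * u) ^ (-((m₂ + ν) / 2))), by linarith, ?_, ?_⟩
  · simp_rw [add_mul]
    refine ((integrableOn_Ioi_rpow_mul_one_add_mul_rpow_neg ?_ ?_ hc).add
      (integrableOn_Ioi_rpow_mul_one_add_mul_rpow_neg ?_ ?_ hc)).const_mul _ <;> linarith
  · have hK : ∀ᶠ m₁ in 𝓝 m, K₀ m₂ ν m₁ < K :=
      (continuousAt_K₀ hm₂ hν hm).eventually (gt_mem_nhds (lt_add_one _))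
    filter_upwards [hK, Icc_mem_nhds hlom hmhi] with m₁ hK hm₁ t ht u hu
    rw [norm_of_nonneg (hDens_nonneg hm₂ hν (by linarith [hm₁.1]) (le_of_lt hu)
      ⟨ht.1.le, by linarith [ht.2]⟩)]
    exact hDens_le hm₂ hν hw (by linarith) hm₁ (by linarith) (by linarith) hK.le ht hu

lemma continuousAt_integral_integral_hDens {m₂ ν w m : ℝ} (hm₂ : 0 < m₂) (hν : 0 < ν)
    (hw0 : 0 < w) (hw1 : w < 1) (hm : 0 < m) :
    ContinuousAt (fun m₁ => ∫ t in (0 : ℝ)..w, ∫ u in Ioi (0 : ℝ), hDens m₂ ν m₁ u t) m := by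
  obtain ⟨α, φ, hα, hφ, hdom⟩ := exists_hDens_dominated hm₂ hν hw1 hm
  have hinner (t : ℝ) (ht : t ∈ Ioc 0 w) :
      ContinuousAt (fun m₁ => ∫ u in Ioi (0 : ℝ), hDens m₂ ν m₁ u t) m :=
    continuousAt_of_dominated
      (Eventually.of_forall fun m₁ => ((measurable_hDens_uncurry m₂ ν m₁).comp
        (measurable_const.prodMk measurable_id)).aestronglyMeasurable)
      (hdom.mono fun m₁ h => (ae_restrict_mem measurableSet_Ioi).mono (h t ht))
      (hφ.const_mul _)
      ((ae_restrict_mem measurableSet_Ioi).mono fun u hu => continuousAt_hDens hm₂ hν hm hu ht.1)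
  rw [← uIoc_of_le hw0.le] at hinner
  refine intervalIntegral.continuousAt_of_dominated_interval
    (bound := fun t => t ^ α * ∫ u in Ioi (0 : ℝ), φ u)
    (Eventually.of_forall fun m₁ =>
      (measurable_hDens_uncurry m₂ ν m₁).stronglyMeasurable.integral_prod_right'
        |>.aestronglyMeasurable)
    ?_ ((intervalIntegral.intervalIntegrable_rpow' hα).mul_const _) (ae_of_all _ hinner)
  filter_upwards [hdom] with m₁ h
  refine ae_of_all _ fun t ht => ?_
  rw [uIoc_of_le hw0.le] at ht
  calc ‖∫ u in Ioi (0 : ℝ), hDens m₂ ν m₁ u t‖ ≤ ∫ u in Ioi (0 : ℝ), t ^ α * φ u :=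
        norm_integral_le_of_norm_le (hφ.const_mul _)
          ((ae_restrict_mem measurableSet_Ioi).mono (h t ht))
    _ = t ^ α * ∫ u in Ioi (0 : ℝ), φ u := integral_const_mul _ _

/-- As `m₁ → (m₂ + 1/2)⁺`, the CDF value `∫₀^w ∫₀^∞ h_{m₁}(u,t) du dt` tends to
`∫₀^w ∫₀^∞ h_{m₂+1/2}(u,t) du dt`; in particular the limit `Λ(w)` exists. -/
theorem cdf_tendsto_at_limit_parameter (m₂ ν : ℝ) (hm₂ : 0 < m₂)
    (hν : m₂ + 1 / 2 < ν) (w : ℝ) (hw0 : 0 < w) (hw1 : w < 1) :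
    Tendsto (fun m₁ : ℝ => ∫ t in (0 : ℝ)..w, ∫ u in Ioi (0 : ℝ), hDens m₂ ν m₁ u t)
      (nhdsWithin (m₂ + 1 / 2) (Ioi (m₂ + 1 / 2)))
      (nhds (∫ t in (0 : ℝ)..w, ∫ u in Ioi (0 : ℝ), hDens m₂ ν (m₂ + 1 / 2) u t)) :=
  (continuousAt_integral_integral_hDens hm₂ (by linarith) hw0 hw1 (by positivity)).tendsto
    |>.mono_left nhdsWithin_le_nhds
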